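/- arXiv:2404.09354 — 2 statements merged into one kernel-verified Lean document; each statement's English description precedes it below -/
import Mathlib

section
/- Let 0 < λ2 ≤ λ1 and set p1* = 1, p2* = (λ2/λ1)², D = 1 + λ1 + λ2 + λ1λ2 + λ2². Then the row vector π = (π00, π10, π01, π11) with π00 = 1/D, π10 = λ1/D, π01 = λ2/D, π11 = (λ1λ2 + λ2²)/D has strictly positive entries summing to 1 and satisfies the global balance equations π·Q(p1*,p2*) = 0; i.e. π is a stationary distribution of the two-node cooperation CTMC at the pair (p1*,p2*). -/
/-- Infinitesimal generator of the two-node cooperation CTMC,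
states ordered 00, 10, 01, 11. -/
noncomputable def genQ (l1 l2 p1 p2 : ℝ) : Matrix (Fin 4) (Fin 4) ℝ :=
  !![-l1-l2, l1, l2, 0;
     1, -1-p2*l1-l2, 0, l2+p2*l1;
     1, 0, -1-p1*l2-l1, l1+p1*l2;
     0, 1, 1, -2]

theorem stationary_at_opt (l1 l2 : ℝ) (hl2 : 0 < l2) (hl : l2 ≤ l1) :
    let D : ℝ := 1 + l1 + l2 + l1*l2 + l2^2
    let π : Fin 4 → ℝ := ![1/D, l1/D, l2/D, (l1*l2 + l2^2)/D]
    (∀ i, 0 < π i) ∧ (∑ i, π i = 1) ∧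
      Matrix.vecMul π (genQ l1 l2 1 ((l2/l1)^2)) = 0 := by
  intro D π
  have hl1 : 0 < l1 := lt_of_lt_of_le hl2 hl
  have hD : 0 < D := by
    have := mul_pos hl1 hl2
    have := pow_pos hl2 2
    unfold D; nlinarith
  refine ⟨?_, ?_, ?_⟩
  · intro i
    fin_cases i <;> simp [π]
    · positivity
    · exact div_pos hl1 hD
    · exact div_pos hl2 hD
    · apply div_pos; nlinarith [mul_pos hl1 hl2, pow_pos hl2 2]; exact hD
  · simp [π, Fin.sum_univ_four]
    field_simp
    ring
  · funext j
    fin_cases j <;>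
      simp [π, genQ, Matrix.vecMul, dotProduct, Fin.sum_univ_four] <;>
      field_simp <;> ring
end

section
/- Let 0 < λ2 ≤ λ1, set p1* = 1, p2* = (λ2/λ1)², and let π = (π00, π10, π01, π11) be any row vector with nonnegative entries summing to 1 satisfying π·Q(p1*,p2*) = 0. Then the fairness constraint R1_in = R1_out holds: the rate a1 = π01·p1*·λ2 at which node 1 executes tasks from node 2 equals the rate a2 = π10·p2*·λ1 at which node 2 executes tasks from node 1, i.e. π01·λ2 = π10·(λ2/λ1)²·λ1. -/
theorem vecMul_genQ_eq_zero_iff (l1 l2 p1 p2 : ℝ) (π : Fin 4 → ℝ) :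
    Matrix.vecMul π (genQ l1 l2 p1 p2) = 0 ↔
      (l1 + l2) * π 0 = π 1 + π 2 ∧
      l1 * π 0 + π 3 = (1 + p2 * l1 + l2) * π 1 ∧
      l2 * π 0 + π 3 = (1 + p1 * l2 + l1) * π 2 ∧
      (l2 + p2 * l1) * π 1 + (l1 + p1 * l2) * π 2 = 2 * π 3 := by
  simp only [funext_iff, Fin.forall_fin_succ, IsEmpty.forall_iff, and_true]
  simp only [Matrix.vecMul, dotProduct, genQ, Fin.isValue, Matrix.of_apply, Matrix.cons_val',
    Matrix.cons_val_zero, Matrix.cons_val_fin_one, Fin.sum_univ_four, Matrix.cons_val_one, mul_one,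
    Matrix.cons_val, mul_zero, add_zero, Pi.zero_apply, Fin.succ_zero_eq_one, Fin.succ_one_eq_two,
    Fin.reduceSucc, zero_add, mul_neg]
  constructor
  · rintro ⟨h0, h1, h2, h3⟩
    refine ⟨?_, ?_, ?_, ?_⟩ <;> linarith
  · rintro ⟨h0, h1, h2, h3⟩
    refine ⟨?_, ?_, ?_, ?_⟩ <;> linarith

theorem mul_stationary_eq_of_genQ_opt {l1 l2 : ℝ} (hl1 : 0 < l1) {π : Fin 4 → ℝ}
    (hstat : Matrix.vecMul π (genQ l1 l2 1 ((l2 / l1) ^ 2)) = 0) :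
    l1 * π 2 = l2 * π 1 := by
  obtain ⟨h0, h1, h2, -⟩ := (vecMul_genQ_eq_zero_iff _ _ _ _ π).mp hstat
  have key : ((l1 + l2) ^ 2 + 2 * l1) * (l1 * π 2 - l2 * π 1) = 0 := by
    have h1' : l1 * (l1 * π 0 + π 3) = (l1 + l2 ^ 2 + l1 * l2) * π 1 := by
      rw [h1]; field_simp
    linear_combination (l1 + l2) * h1' - l1 * (l1 + l2) * h2 - l1 * (l1 - l2) * h0
  have hS : (l1 + l2) ^ 2 + 2 * l1 ≠ 0 := by positivity
  linear_combination (mul_eq_zero.mp key).resolve_left hS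

theorem fairness_at_opt_general (l1 l2 : ℝ) (hl2 : 0 < l2) (hl : l2 ≤ l1)
    (π : Fin 4 → ℝ)
    (hstat : Matrix.vecMul π (genQ l1 l2 1 ((l2/l1)^2)) = 0) :
    π 2 * 1 * l2 = π 1 * ((l2/l1)^2) * l1 := by
  have hl1 : 0 < l1 := hl2.trans_le hl
  have hbal := mul_stationary_eq_of_genQ_opt hl1 hstat
  field_simp
  linear_combination hbal

theorem fairness_at_opt (l1 l2 : ℝ) (hl2 : 0 < l2) (hl : l2 ≤ l1)
    (π : Fin 4 → ℝ) (hnn : ∀ i, 0 ≤ π i) (hsum : ∑ i, π i = 1)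
    (hstat : Matrix.vecMul π (genQ l1 l2 1 ((l2/l1)^2)) = 0) :
    π 2 * 1 * l2 = π 1 * ((l2/l1)^2) * l1 :=
  fairness_at_opt_general l1 l2 hl2 hl π hstat
end
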